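/- arXiv:2003.07073 — 3 statements merged into one kernel-verified Lean document; each statement's English description precedes it below -/
import Mathlib

section
/- Let h_k ≥ 0 satisfy h_k ≤ (1 − γ_k) h_{k−1} + C γ_k²/2 with γ_k = 2/(k+1) and C > 0. Then h_k ≤ 2C/(k+2) for all k ≥ 1. -/
/-- Key recursion of the Frank–Wolfe analysis: if `h_k ≤ (1−γ_k)h_{k−1} + Cγ_k²/2`
with `γ_k = 2/(k+1)` and `C > 0`, then `h_k ≤ 2C/(k+2)` for all `k ≥ 1`. -/
theorem fw_recursion_rate (h : ℕ → ℝ) (C : ℝ) (hC : 0 < C)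
    (hnn : ∀ k, 0 ≤ h k)
    (hrec : ∀ k, 1 ≤ k →
      h k ≤ (1 - 2/((k:ℝ)+1)) * h (k-1) + C * (2/((k:ℝ)+1))^2 / 2) :
    ∀ k, 1 ≤ k → h k ≤ 2 * C / ((k:ℝ) + 2) := by
  intro k hk
  induction k with
  | zero => omega
  | succ n ih =>
    rcases Nat.eq_or_lt_of_le hk with heq | hlt
    · -- n = 0, k = 1
      have h1 : n = 0 := by omega
      subst h1
      have := hrec 1 le_rfl
      norm_num at this ⊢
      linarith
    · have hn1 : 1 ≤ n := by omega
      have ihn := ih hn1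
      have hr := hrec (n+1) (by omega)
      have hcast : ((n+1 : ℕ) : ℝ) = (n : ℝ) + 1 := by push_cast; ring
      simp only [Nat.add_sub_cancel] at hr
      rw [hcast] at hr
      have hnpos : (0:ℝ) ≤ (n:ℝ) := Nat.cast_nonneg n
      have hd2 : (0:ℝ) < (n:ℝ) + 2 := by linarith
      have hd3 : (0:ℝ) < (n:ℝ) + 3 := by linarith
      have hcoef : (0:ℝ) ≤ 1 - 2/((n:ℝ)+1+1) := by
        rw [sub_nonneg, div_le_one (by linarith)]; linarith
      have step : h (n+1) ≤ (1 - 2/((n:ℝ)+2)) * (2*C/((n:ℝ)+2)) + C * (2/((n:ℝ)+2))^2 / 2 := by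
        have := mul_le_mul_of_nonneg_left ihn hcoef
        have h22 : (n:ℝ)+1+1 = (n:ℝ)+2 := by ring
        rw [h22] at hr this hcoef
        linarith
      have key : (1 - 2/((n:ℝ)+2)) * (2*C/((n:ℝ)+2)) + C * (2/((n:ℝ)+2))^2 / 2
          ≤ 2*C/((n:ℝ)+3) := by
        have e1 : (1 - 2/((n:ℝ)+2)) * (2*C/((n:ℝ)+2)) + C * (2/((n:ℝ)+2))^2 / 2
            = 2*C*((n:ℝ)+1)/((n:ℝ)+2)^2 := by
          field_simp; ring
        rw [e1, div_le_div_iff₀ (by positivity) hd3]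
        nlinarith
      have hcast2 : ((n+1 : ℕ) : ℝ) + 2 = (n:ℝ) + 3 := by push_cast; ring
      rw [hcast2]
      linarith
end

section
/- Suppose for all ε ∈ (0, ε₀) the inequality C·√(LR²/ε)·(ln(1/ε))^p ≥ min{n/2, LR²/(4ε)} holds, where C, L, R > 0 and p ≥ 1. Then, choosing ε = LR²/(2n), one gets C ≥ √n / (c_p (ln n)^p) for some constant c_p > 0 and all sufficiently large n (with LR² fixed). -/
/-- If, for every dimension `n`, the accelerated complexity bound
`C_n·√(LR²/ε)·ln^p(1/ε)` dominates the lower bound `min{n/2, LR²/(4ε)}` for all small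
`ε > 0`, then `C_n ≥ √n/(c_p (ln n)^p)` for some `c_p > 0` and all sufficiently large `n`. -/
theorem lower_bound_forces_sqrt_dimension
    (L R ε₀ p : ℝ) (hL : 0 < L) (hR : 0 < R) (hε₀ : 0 < ε₀) (hp : 1 ≤ p)
    (C : ℕ → ℝ) (hC : ∀ n, 0 < C n)
    (hyp : ∀ n : ℕ, ∀ ε : ℝ, 0 < ε → ε < ε₀ →
      min ((n:ℝ)/2) (L * R^2 / (4 * ε))
        ≤ C n * Real.sqrt (L * R^2 / ε) * Real.log (1/ε) ^ p) :
    ∃ c : ℝ, 0 < c ∧ ∃ N : ℕ, ∀ n : ℕ, N ≤ n →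
      Real.sqrt n / (c * Real.log n ^ p) ≤ C n := by
  set K := L * R ^ 2 with hKdef
  have hK : 0 < K := by positivity
  have hp0 : 0 ≤ p := le_trans zero_le_one hp
  refine ⟨2 * Real.sqrt 2 * (2 : ℝ) ^ p, by positivity,
    ⌈K / (2 * ε₀)⌉₊ + ⌈2 / K⌉₊ + ⌈K⌉₊ + 3, fun n hn => ?_⟩
  -- basic numeric facts about n
  have hn3 : (3 : ℝ) ≤ (n : ℝ) := by
    have : (3 : ℕ) ≤ n := le_trans (by omega) hn
    exact_mod_cast this
  have hnpos : (0 : ℝ) < n := by linarith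
  have hn_ge1 : K / (2 * ε₀) < (n : ℝ) := by
    have h1 : K / (2 * ε₀) ≤ (⌈K / (2 * ε₀)⌉₊ : ℝ) := Nat.le_ceil _
    have h2 : (⌈K / (2 * ε₀)⌉₊ : ℝ) + 1 ≤ (n : ℝ) := by
      have : ⌈K / (2 * ε₀)⌉₊ + 1 ≤ n := by omega
      exact_mod_cast this
    linarith
  have hn_ge2 : 2 / K ≤ (n : ℝ) := by
    have h1 : 2 / K ≤ (⌈2 / K⌉₊ : ℝ) := Nat.le_ceil _
    have h2 : (⌈2 / K⌉₊ : ℝ) ≤ (n : ℝ) := by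
      have : ⌈2 / K⌉₊ ≤ n := by omega
      exact_mod_cast this
    linarith
  have hn_ge3 : K ≤ (n : ℝ) := by
    have h1 : K ≤ (⌈K⌉₊ : ℝ) := Nat.le_ceil _
    have h2 : (⌈K⌉₊ : ℝ) ≤ (n : ℝ) := by
      have : ⌈K⌉₊ ≤ n := by omega
      exact_mod_cast this
    linarith
  -- pick ε = K/(2n)
  set ε : ℝ := K / (2 * n) with hεdef
  have hε : 0 < ε := by positivity
  have hεlt : ε < ε₀ := by
    rw [hεdef, div_lt_iff₀ (by positivity)]
    have := (div_lt_iff₀ (by positivity : (0:ℝ) < 2 * ε₀)).mp hn_ge1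
    nlinarith
  have key := hyp n ε hε hεlt
  have hmin : min ((n : ℝ) / 2) (K / (4 * ε)) = (n : ℝ) / 2 := by
    have : K / (4 * ε) = (n : ℝ) / 2 := by
      rw [hεdef]; field_simp; ring
    rw [this, min_self]
  have hKε : K / ε = 2 * n := by rw [hεdef]; field_simp
  have hinv : 1 / ε = 2 * n / K := by rw [hεdef]; field_simp
  rw [hmin, hKε, hinv] at key
  -- log bounds
  have hlogn1 : (1 : ℝ) ≤ Real.log n := by
    rw [Real.le_log_iff_exp_le hnpos]
    have := Real.exp_one_lt_d9
    linarith
  have hlognpos : 0 < Real.log n := lt_of_lt_of_le one_pos hlogn1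
  have hlog2 : Real.log (2 * n / K) ≤ 2 * Real.log n := by
    have hrw : 2 * (n : ℝ) / K = (2 / K) * n := by ring
    rw [hrw, Real.log_mul (by positivity) (ne_of_gt hnpos)]
    have : Real.log (2 / K) ≤ Real.log n := Real.log_le_log (by positivity) hn_ge2
    linarith
  have hlog0 : 0 ≤ Real.log (2 * n / K) := by
    apply Real.log_nonneg
    rw [le_div_iff₀ hK]
    nlinarith
  -- rpow bound
  have hrpow : Real.log (2 * n / K) ^ p ≤ (2:ℝ) ^ p * Real.log n ^ p := by
    calc Real.log (2 * n / K) ^ p ≤ (2 * Real.log n) ^ p :=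
          Real.rpow_le_rpow hlog0 hlog2 hp0
      _ = (2:ℝ) ^ p * Real.log n ^ p := Real.mul_rpow (by norm_num) (le_of_lt hlognpos)
  have hsqrt : Real.sqrt (2 * n) = Real.sqrt 2 * Real.sqrt n := by
    rw [← Real.sqrt_mul (by norm_num)]
  have hs : 0 < Real.sqrt n := Real.sqrt_pos.mpr hnpos
  have hs2 : 0 < Real.sqrt 2 := by positivity
  have htp : 0 < Real.log n ^ p := Real.rpow_pos_of_pos hlognpos p
  have hap : 0 < (2:ℝ) ^ p := Real.rpow_pos_of_pos (by norm_num) p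
  have hCn := hC n
  -- combine
  have key2 : (n : ℝ) / 2 ≤ C n * (Real.sqrt 2 * Real.sqrt n) * ((2:ℝ) ^ p * Real.log n ^ p) := by
    calc (n : ℝ) / 2 ≤ C n * Real.sqrt (2 * n) * Real.log (2 * n / K) ^ p := key
      _ ≤ C n * Real.sqrt (2 * n) * ((2:ℝ) ^ p * Real.log n ^ p) := by
          apply mul_le_mul_of_nonneg_left hrpow
          positivity
      _ = C n * (Real.sqrt 2 * Real.sqrt n) * ((2:ℝ) ^ p * Real.log n ^ p) := by rw [hsqrt]
  rw [div_le_iff₀ (by positivity)]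
  refine le_of_mul_le_mul_right ?_ hs
  calc Real.sqrt n * Real.sqrt n = (n : ℝ) := Real.mul_self_sqrt hnpos.le
    _ ≤ C n * (2 * Real.sqrt 2 * (2:ℝ) ^ p * Real.log n ^ p) * Real.sqrt n := by
        nlinarith [key2]
end

section
/- In the Monteiro–Svaiter method with a_{k+1} = (1/κ + √(1/κ² + 4A_k/κ))/2 and A_{k+1} = A_k + a_{k+1}, A_0 = 0, κ > 0, the sequence satisfies A_{k+1} = κ·a_{k+1}² and A_k ≥ k²/(4κ) for all k ≥ 1. -/
/-!
The step `a = (1/κ + √(1/κ² + 4A/κ))/2` is the positive root of `κ a² - a - A = 0`, which gives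
`A + a = κ a²`. For the growth bound, dropping `1/κ²` under the root gives `a ≥ (1/κ + √(4A/κ))/2`,
so `A ≥ k²/(4κ)` forces `a ≥ (k+1)/(2κ)` and hence
`A + a ≥ (k² + 2k + 2)/(4κ) ≥ (k+1)²/(4κ)`.
-/

open Real

noncomputable def monteiroSvaiterStep (κ A : ℝ) : ℝ :=
  (1 / κ + √(1 / κ ^ 2 + 4 * A / κ)) / 2

section

variable {κ A : ℝ}

theorem monteiroSvaiterStep_sq (hκ : 0 < κ) (hA : 0 ≤ A) :
    κ * monteiroSvaiterStep κ A ^ 2 = A + monteiroSvaiterStep κ A := by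
  have hs : √(1 / κ ^ 2 + 4 * A / κ) ^ 2 = 1 / κ ^ 2 + 4 * A / κ :=
    sq_sqrt (by positivity)
  unfold monteiroSvaiterStep
  field_simp at hs ⊢
  linear_combination hs

theorem succ_div_two_mul_le_monteiroSvaiterStep (hκ : 0 < κ) {t : ℝ}
    (hA : t ^ 2 / (4 * κ) ≤ A) : (t + 1) / (2 * κ) ≤ monteiroSvaiterStep κ A := by
  have hsqrt : t / κ ≤ √(1 / κ ^ 2 + 4 * A / κ) := by
    apply le_sqrt_of_sq_le
    have h4A : t ^ 2 / κ ^ 2 ≤ 4 * A / κ := by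
      calc t ^ 2 / κ ^ 2 = 4 * (t ^ 2 / (4 * κ)) / κ := by field_simp
        _ ≤ 4 * A / κ := by gcongr
    rw [div_pow]
    linarith [one_div_pos.mpr (pow_pos hκ 2)]
  calc (t + 1) / (2 * κ) = (1 / κ + t / κ) / 2 := by field_simp; ring
    _ ≤ monteiroSvaiterStep κ A := by unfold monteiroSvaiterStep; gcongr

theorem succ_sq_div_le_add_monteiroSvaiterStep (hκ : 0 < κ) {t : ℝ}
    (hA : t ^ 2 / (4 * κ) ≤ A) :
    (t + 1) ^ 2 / (4 * κ) ≤ A + monteiroSvaiterStep κ A := by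
  have hsplit : t ^ 2 / (4 * κ) + (t + 1) / (2 * κ) = (t + 1) ^ 2 / (4 * κ) + 1 / (4 * κ) := by
    field_simp
    ring
  have hpos : 0 < 1 / (4 * κ) := by positivity
  linarith [succ_div_two_mul_le_monteiroSvaiterStep hκ hA]

end

/-- In the Monteiro–Svaiter recursion `a_{k+1} = (1/κ + √(1/κ² + 4A_k/κ))/2`,
`A_{k+1} = A_k + a_{k+1}`, `A_0 = 0`, one has `A_{k+1} = κ a_{k+1}²` and
`A_k ≥ k²/(4κ)` for all `k ≥ 1`. -/
theorem monteiro_svaiter_growth (κ : ℝ) (hκ : 0 < κ) (a A : ℕ → ℝ)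
    (hA0 : A 0 = 0)
    (ha : ∀ k : ℕ, a (k+1) = (1/κ + Real.sqrt (1/κ^2 + 4 * A k / κ)) / 2)
    (hA : ∀ k : ℕ, A (k+1) = A k + a (k+1)) :
    (∀ k : ℕ, A (k+1) = κ * a (k+1)^2) ∧
    (∀ k : ℕ, 1 ≤ k → (k:ℝ)^2 / (4 * κ) ≤ A k) := by
  have hstep (k : ℕ) : a (k + 1) = monteiroSvaiterStep κ (A k) := ha k
  have hgrowth (k : ℕ) : (k : ℝ) ^ 2 / (4 * κ) ≤ A k := by
    induction k with
    | zero => simp [hA0]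
    | succ k ih =>
      rw [hA, hstep, Nat.cast_succ]
      exact succ_sq_div_le_add_monteiroSvaiterStep hκ ih
  refine ⟨fun k => ?_, fun k _ => hgrowth k⟩
  have hAk : 0 ≤ A k := le_trans (by positivity) (hgrowth k)
  rw [hA, hstep, monteiroSvaiterStep_sq hκ hAk]
end
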